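/- Let D ∈ ℝ^{n×n} be invertible, B ∈ ℝ^{n×m}, J_y ∈ ℝ^{m×n} with right inverse J† ∈ ℝ^{n×m} (J_y J† = I_m), and suppose A := J_y D⁻¹ B is invertible. Fix c ∈ ℝ^m, w ∈ ℝ^n and v ∈ ℝ^m, and set b := c + J_y D⁻¹ w. Let u ∈ ℝ^m be any input whose resulting acceleration q̈_u := D⁻¹(B u + w) satisfies q̈_u = J†(v − c), and let u_FBL := A⁻¹(v − b) be the feedback linearizing input with resulting acceleration q̈_FBL := D⁻¹(B u_FBL + w). Then the output responses coincide: c + J_y q̈_u = c + J_y q̈_FBL = v. (Theorem 1: any controller in the set K(q,q̇) = {u : q̈ = J†_y(−J̇_y q̇ + v)} elicits the same response in the output dynamics as the IO feedback linearizing controller u = A⁻¹(−L_f y + v).) -/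
import Mathlib


open Matrix

/-- Theorem 1 of the paper: any input `u` whose resulting acceleration
`q̈_u = D⁻¹(B u + w)` equals `Jdag (v − c)` elicits the same output response as the
IO feedback linearizing input `u_FBL = A⁻¹(v − b)`, namely
`c + Jy q̈_u = c + Jy q̈_FBL = v`. -/
theorem stmt_2 {n m : ℕ}
    (D : Matrix (Fin n) (Fin n) ℝ) (hD : IsUnit D)
    (B : Matrix (Fin n) (Fin m) ℝ)
    (Jy : Matrix (Fin m) (Fin n) ℝ) (Jdag : Matrix (Fin n) (Fin m) ℝ)
    (hJ : Jy * Jdag = 1)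
    (hA : IsUnit (Jy * D⁻¹ * B))
    (c : Fin m → ℝ) (w : Fin n → ℝ) (v : Fin m → ℝ)
    (u : Fin m → ℝ)
    (hu : D⁻¹.mulVec (B.mulVec u + w) = Jdag.mulVec (v - c)) :
    c + Jy.mulVec (D⁻¹.mulVec (B.mulVec u + w)) = v ∧
    c + Jy.mulVec
      (D⁻¹.mulVec
        (B.mulVec ((Jy * D⁻¹ * B)⁻¹.mulVec (v - (c + (Jy * D⁻¹).mulVec w))) + w)) = v := by
  constructor
  · rw [hu, mulVec_mulVec, hJ, one_mulVec]
    abel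
  · have hAA : (Jy * D⁻¹ * B) * (Jy * D⁻¹ * B)⁻¹ = 1 := mul_nonsing_inv _ ((Matrix.isUnit_iff_isUnit_det _).mp hA)
    have key : Jy.mulVec (D⁻¹.mulVec (B.mulVec ((Jy * D⁻¹ * B)⁻¹.mulVec
        (v - (c + (Jy * D⁻¹).mulVec w))))) = v - (c + (Jy * D⁻¹).mulVec w) := by
      rw [mulVec_mulVec, mulVec_mulVec, mulVec_mulVec,
        hAA, one_mulVec]
    rw [mulVec_add, mulVec_add, key, mulVec_mulVec]
    abel
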